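/- Let X, Y be two compact topological spaces endowed with continuous functions φ: X → ℝⁿ and ψ: Y → ℝⁿ. Then for every integer k, d_T(H_k^{(X,φ)}, H_k^{(Y,ψ)}) ≤ δ((X,φ), (Y,ψ)), i.e. the pseudo-distance d_T between the k-th persistent homology groups is a lower bound for the natural pseudo-distance. -/

import Mathlib

open CategoryTheory

/-- The "chains with coefficients in `G`" functor `S ↦ S →₀ G`. -/
@[simps]
noncomputable def coeffFunctor (G : Type) [AddCommGroup G] : Type ⥤ AddCommGrpCat where
  obj S := AddCommGrpCat.of (S →₀ G)
  map f := AddCommGrpCat.ofHom (Finsupp.mapDomain.addMonoidHom f)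
  map_id S := AddCommGrpCat.hom_ext Finsupp.mapDomain.addMonoidHom_id
  map_comp f g := AddCommGrpCat.hom_ext (Finsupp.mapDomain.addMonoidHom_comp g f)

/-- The singular chain complex with coefficients in the abelian group `G`. -/
noncomputable def singularChainComplexFunctor (G : Type) [AddCommGroup G] :
    TopCat.{0} ⥤ ChainComplex AddCommGrpCat ℕ :=
  TopCat.toSSet ⋙ ((SimplicialObject.whiskering (Type 0) AddCommGrpCat).obj (coeffFunctor G)) ⋙
    AlgebraicTopology.alternatingFaceMapComplex AddCommGrpCat

/-- Singular homology with coefficients in `G`, in degree `k : ℤ` (trivial in negative degrees). -/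
noncomputable def singularHomologyFunctor (G : Type) [AddCommGroup G] (k : ℤ) :
    TopCat.{0} ⥤ AddCommGrpCat :=
  if 0 ≤ k then
    singularChainComplexFunctor G ⋙ HomologicalComplex.homologyFunctor AddCommGrpCat _ k.toNat
  else (Functor.const _).obj (AddCommGrpCat.of PUnit)

/-- The sublevel set `X⟨φ ≼ u⟩`. -/
def sublevelSet {n : ℕ} {X : Type} (φ : X → Fin n → ℝ) (u : Fin n → ℝ) : Set X :=
  {x | ∀ i, φ x i ≤ u i}

/-- The sublevel set as a topological space. -/
def sublevelTop {n : ℕ} {X : Type} [TopologicalSpace X] (φ : X → Fin n → ℝ)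
    (u : Fin n → ℝ) : TopCat.{0} :=
  TopCat.of (sublevelSet φ u)

/-- The inclusion of sublevel sets. -/
def sublevelIncl {n : ℕ} {X : Type} [TopologicalSpace X] (φ : X → Fin n → ℝ)
    {u v : Fin n → ℝ} (h : ∀ i, u i ≤ v i) : sublevelTop φ u ⟶ sublevelTop φ v :=
  TopCat.ofHom <| ContinuousMap.mk (Set.inclusion (fun _x hx i => le_trans (hx i) (h i)))
    (continuous_inclusion _)

/-- The multidimensional `k`-th persistent homology group of `(X, φ)` at `(u, v)`,
with coefficients in the abelian group `G`: the image of the homomorphism induced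
in homology by the inclusion of sublevel sets. -/
noncomputable def persistentHomologyGroup (G : Type) [AddCommGroup G] (k : ℤ)
    {n : ℕ} {X : Type} [TopologicalSpace X] (φ : X → Fin n → ℝ)
    {u v : Fin n → ℝ} (h : ∀ i, u i ≤ v i) : Type :=
  AddMonoidHom.range ((singularHomologyFunctor G k).map (sublevelIncl φ h)).hom

noncomputable instance (G : Type) [AddCommGroup G] (k : ℤ)
    {n : ℕ} {X : Type} [TopologicalSpace X] (φ : X → Fin n → ℝ)
    {u v : Fin n → ℝ} (h : ∀ i, u i ≤ v i) :
    AddCommGroup (persistentHomologyGroup G k φ h) := by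
  unfold persistentHomologyGroup; infer_instance

/-- There is a surjective homomorphism from a subgroup of `A` onto `B`. -/
def ExistsSurjHomFromSubgroup (A B : Type) [AddCommGroup A] [AddCommGroup B] : Prop :=
  ∃ (S : AddSubgroup A) (f : S →+ B), Function.Surjective f

/-- The set `E` of all `ε ≥ 0` such that, for every `(u,v) ∈ Δ⁺`, surjective homomorphisms
exist from a subgroup of `H_k^{(X,φ)}(u,v)` onto `H_k^{(Y,ψ)}(u-ε⃗,v+ε⃗)` and from a subgroup of
`H_k^{(Y,ψ)}(u,v)` onto `H_k^{(X,φ)}(u-ε⃗,v+ε⃗)`. -/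
def dTSet (G : Type) [AddCommGroup G] (k : ℤ) {n : ℕ} {X Y : Type}
    [TopologicalSpace X] [TopologicalSpace Y]
    (φ : X → Fin n → ℝ) (ψ : Y → Fin n → ℝ) : Set ℝ :=
  {ε | ∃ hε : 0 ≤ ε, ∀ u v : Fin n → ℝ, ∀ h : ∀ i, u i < v i,
    ExistsSurjHomFromSubgroup
      (persistentHomologyGroup G k φ (fun i => (h i).le))
      (persistentHomologyGroup G k ψ
        (u := fun i => u i - ε) (v := fun i => v i + ε)
        (fun i => by have := (h i).le; (try dsimp only); linarith)) ∧
    ExistsSurjHomFromSubgroup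
      (persistentHomologyGroup G k ψ (fun i => (h i).le))
      (persistentHomologyGroup G k φ
        (u := fun i => u i - ε) (v := fun i => v i + ε)
        (fun i => by have := (h i).le; (try dsimp only); linarith))}

/-- The pseudo-distance `d_T` between the `k`-th persistent homology groups of `(X,φ)`
and `(Y,ψ)`: the infimum of the set `E` (`∞` if `E` is empty). -/
noncomputable def dT (G : Type) [AddCommGroup G] (k : ℤ) {n : ℕ} {X Y : Type}
    [TopologicalSpace X] [TopologicalSpace Y]
    (φ : X → Fin n → ℝ) (ψ : Y → Fin n → ℝ) : ENNReal :=
  sInf (ENNReal.ofReal '' dTSet G k φ ψ)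

/-- The sup-norm (max-norm) distance between two `ℝⁿ`-valued functions. -/
noncomputable def supNormDist {n : ℕ} {X : Type} (φ ψ : X → Fin n → ℝ) : ENNReal :=
  ⨆ (x : X) (i : Fin n), ENNReal.ofReal |φ x i - ψ x i|

/-- The natural pseudo-distance between `(X,φ)` and `(Y,ψ)`:
`inf_h ‖φ - ψ ∘ h‖_∞` over all homeomorphisms `h : X → Y` (`∞` if none exists). -/
noncomputable def naturalPseudoDistance {n : ℕ} {X Y : Type}
    [TopologicalSpace X] [TopologicalSpace Y]
    (φ : X → Fin n → ℝ) (ψ : Y → Fin n → ℝ) : ENNReal :=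
  ⨅ (h : X ≃ₜ Y), supNormDist φ (fun x => ψ (h x))

/-!
A homeomorphism `h : X ≃ₜ Y` with `‖φ - ψ ∘ h‖_∞ ≤ ε` maps `X⟨φ ≼ v⟩` into `Y⟨ψ ≼ v + ε⃗⟩`, and
`h⁻¹` maps `Y⟨ψ ≼ u - ε⃗⟩` into `X⟨φ ≼ u⟩`. The inclusion `Y⟨ψ ≼ u - ε⃗⟩ ⊆ Y⟨ψ ≼ v + ε⃗⟩` thus
factors through the inclusion `X⟨φ ≼ u⟩ ⊆ X⟨φ ≼ v⟩`, so in homology the image of the former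
is a homomorphic image of a subgroup of the image of the latter. Hence `ε` lies in the set `E`
defining `d_T`, and taking the infimum over `h` gives the bound.
-/

open Set

lemma existsSurjHomFromSubgroup_range_of_factor {A' A B C : Type} [AddCommGroup A']
    [AddCommGroup A] [AddCommGroup B] [AddCommGroup C]
    (p : A' →+ A) (f : A →+ B) (g : B →+ C) (e : A' →+ C) (he : ∀ a, e a = g (f (p a))) :
    ExistsSurjHomFromSubgroup f.range e.range := by
  let gf : f.range →+ C := g.comp f.range.subtype
  refine ⟨e.range.comap gf, gf.comp (AddSubgroup.subtype _) |>.codRestrict e.range (·.2), ?_⟩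
  rintro ⟨_, a, rfl⟩
  exact ⟨⟨⟨f (p a), p a, rfl⟩, a, he a⟩, Subtype.ext (he a).symm⟩

section Sublevel

variable {n : ℕ} {X Y : Type} {φ : X → Fin n → ℝ} {ψ : Y → Fin n → ℝ}

lemma mapsTo_sublevelSet {f : X → Y} {ε : ℝ} (hf : ∀ x i, ψ (f x) i ≤ φ x i + ε)
    {u v : Fin n → ℝ} (huv : ∀ i, u i + ε ≤ v i) :
    MapsTo f (sublevelSet φ u) (sublevelSet ψ v) :=
  fun x hx i => by linarith [hf x i, hx i, huv i]

variable [TopologicalSpace X] [TopologicalSpace Y]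

def sublevelMap {f : X → Y} (hf : Continuous f) {u v : Fin n → ℝ}
    (hmaps : MapsTo f (sublevelSet φ u) (sublevelSet ψ v)) : sublevelTop φ u ⟶ sublevelTop ψ v :=
  TopCat.ofHom ⟨hmaps.restrict f _ _, hf.restrict hmaps⟩

lemma existsSurjHomFromSubgroup_of_homeomorph (G : Type) [AddCommGroup G] (k : ℤ)
    (h : X ≃ₜ Y) {ε : ℝ} (hε : ∀ x i, |φ x i - ψ (h x) i| ≤ ε)
    {u v : Fin n → ℝ} (huv : ∀ i, u i ≤ v i)
    (huv' : ∀ i, u i - ε ≤ v i + ε) :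
    ExistsSurjHomFromSubgroup (persistentHomologyGroup G k φ huv)
      (persistentHomologyGroup G k ψ (u := fun i => u i - ε) (v := fun i => v i + ε) huv') := by
  have hup : ∀ x i, ψ (h x) i ≤ φ x i + ε := fun x i => by linarith [(abs_le.1 (hε x i)).1]
  have hdown : ∀ y i, φ (h.symm y) i ≤ ψ y i + ε := fun y i => by
    simpa using sub_le_iff_le_add'.1 (abs_le.1 (hε (h.symm y) i)).2
  have down : MapsTo h.symm (sublevelSet ψ fun i => u i - ε) (sublevelSet φ u) :=
    mapsTo_sublevelSet hdown fun _ => (sub_add_cancel _ _).le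
  have up : MapsTo h (sublevelSet φ v) (sublevelSet ψ fun i => v i + ε) :=
    mapsTo_sublevelSet hup fun _ => le_rfl
  have factor : sublevelMap h.symm.continuous down ≫ sublevelIncl φ huv ≫
      sublevelMap h.continuous up = sublevelIncl ψ huv' := by
    ext y
    exact Subtype.ext (h.apply_symm_apply y.1)
  let F := singularHomologyFunctor G k
  refine existsSurjHomFromSubgroup_range_of_factor
    (F.map (sublevelMap h.symm.continuous down)).hom (F.map (sublevelIncl φ huv)).hom
    (F.map (sublevelMap h.continuous up)).hom _ fun a => ?_
  rw [← factor, F.map_comp, F.map_comp]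
  rfl

lemma mem_dTSet_of_homeomorph (G : Type) [AddCommGroup G] (k : ℤ) (h : X ≃ₜ Y) {ε : ℝ}
    (hε₀ : 0 ≤ ε) (hε : ∀ x i, |φ x i - ψ (h x) i| ≤ ε) : ε ∈ dTSet G k φ ψ := by
  have hε' : ∀ y i, |ψ y i - φ (h.symm y) i| ≤ ε := fun y i => by
    simpa [abs_sub_comm] using hε (h.symm y) i
  refine ⟨hε₀, fun u v huv => ⟨?_, ?_⟩⟩
  · exact existsSurjHomFromSubgroup_of_homeomorph G k h hε _ _
  · exact existsSurjHomFromSubgroup_of_homeomorph G k h.symm hε' _ _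

end Sublevel

lemma abs_sub_le_toReal_supNormDist {n : ℕ} {X : Type} {φ φ' : X → Fin n → ℝ}
    (hD : supNormDist φ φ' ≠ ⊤) (x : X) (i : Fin n) :
    |φ x i - φ' x i| ≤ (supNormDist φ φ').toReal := by
  rw [← ENNReal.toReal_ofReal (abs_nonneg (φ x i - φ' x i))]
  exact ENNReal.toReal_mono hD (le_iSup₂_of_le (f := fun x i => _) x i le_rfl)

theorem dT_le_naturalPseudoDistance_general (G : Type) [AddCommGroup G] (k : ℤ) (n : ℕ)
    {X Y : Type} [TopologicalSpace X] [TopologicalSpace Y]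
    (φ : X → Fin n → ℝ) (ψ : Y → Fin n → ℝ) :
    dT G k φ ψ ≤ naturalPseudoDistance φ ψ := by
  refine le_iInf fun h => ?_
  by_cases hD : supNormDist φ (fun x => ψ (h x)) = ⊤
  · exact hD ▸ le_top
  have hmem := mem_dTSet_of_homeomorph G k h ENNReal.toReal_nonneg
    (abs_sub_le_toReal_supNormDist hD)
  calc dT G k φ ψ ≤ ENNReal.ofReal (supNormDist φ (fun x => ψ (h x))).toReal :=
        sInf_le (mem_image_of_mem _ hmem)
    _ = supNormDist φ (fun x => ψ (h x)) := ENNReal.ofReal_toReal hD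

/-- **Theorem (lower bound for the natural pseudo-distance).** Let `X`, `Y` be two compact
topological spaces endowed with continuous functions `φ : X → ℝⁿ`, `ψ : Y → ℝⁿ`. Then, for
every integer `k`, `d_T(H_k^{(X,φ)}, H_k^{(Y,ψ)}) ≤ δ((X,φ), (Y,ψ))`. -/
theorem dT_le_naturalPseudoDistance (G : Type) [AddCommGroup G] (k : ℤ) (n : ℕ)
    {X Y : Type} [TopologicalSpace X] [TopologicalSpace Y]
    [CompactSpace X] [CompactSpace Y]
    (φ : X → Fin n → ℝ) (ψ : Y → Fin n → ℝ) (hφ : Continuous φ) (hψ : Continuous ψ) :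
    dT G k φ ψ ≤ naturalPseudoDistance φ ψ :=
  dT_le_naturalPseudoDistance_general G k n φ ψ
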